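/- Clean-up positivity: let (X, δ¹) be a type D structure with positive differential over A ⊗ F[U, U⁻¹], and let g = (x → g_A · y) be a morphism between two distinct generators with g_A of homological grading 0, g² = 0, d(g_A) = 0, and g∘δ¹∘g = 0. Then the modified differential δ¹_Y = δ¹ + g∘δ¹ + δ¹∘g also satisfies the type D structure relation and is positive, and Y is homotopy equivalent to X via (id + g). -/
import Mathlib


/-- An element of `A[U,U⁻¹]` is *positive* if it involves no negative
powers of `U`, i.e. lies in the image of `A[U]`. -/
def IsPositiveLaurent {A : Type} [Ring A] (f : LaurentPolynomial A) : Prop :=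
  ∃ p : Polynomial A, Polynomial.toLaurent p = f

/-- clean-up positivity: let `(I, δ)` be a type D structure
over `A ⊗ F[U,U⁻¹]` (`A` of characteristic 2; structure relation
`∑_w δ(w,z₂)·δ(z₁,w) = 0`) with positive differential, and let `g` be a
morphism supported on a single pair of distinct generators `x → g_A·y`
with positive (U-power zero) coefficient, satisfying `g² = 0` and
`g∘δ¹∘g = 0` (the condition `d(g_A) = 0` is automatic since the relevant
algebra has zero differential). Then the modified differential
`δ_Y = δ¹ + g∘δ¹ + δ¹∘g` also satisfies the type D structure relation and
is positive, and `Y` is homotopy equivalent (isomorphic) to `X` via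
`id + g`. -/
theorem stmt_13 (A : Type) [Ring A] [CharP A 2]
    (I : Type) [Fintype I] [DecidableEq I]
    (δ g : I → I → LaurentPolynomial A)
    (hδpos : ∀ z w, IsPositiveLaurent (δ z w))
    (hgpos : ∀ z w, IsPositiveLaurent (g z w))
    (x y : I) (hxy : x ≠ y)
    (hsupp : ∀ z w, (z, w) ≠ (x, y) → g z w = 0)
    (hrel : ∀ z₁ z₂, ∑ w, δ w z₂ * δ z₁ w = 0)
    (hg2 : ∀ z₁ z₂, ∑ w, g w z₂ * g z₁ w = 0)
    (hgδg : ∀ z₁ z₂, ∑ w, ∑ v, g v z₂ * δ w v * g z₁ w = 0) :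
    let δY : I → I → LaurentPolynomial A := fun z₁ z₂ =>
      δ z₁ z₂ + (∑ w, g w z₂ * δ z₁ w) + (∑ w, δ w z₂ * g z₁ w)
    let e : I → I → LaurentPolynomial A := fun z w => if z = w then 1 else 0
    (∀ z₁ z₂, IsPositiveLaurent (δY z₁ z₂)) ∧
    (∀ z₁ z₂, ∑ w, δY w z₂ * δY z₁ w = 0) ∧
    (∀ z₁ z₂, ∑ w, δY w z₂ * (e z₁ w + g z₁ w)
        = ∑ w, (e w z₂ + g w z₂) * δ z₁ w) := by
  intro δY e
  -- positivity closure lemmas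
  have hadd : ∀ f₁ f₂ : LaurentPolynomial A, IsPositiveLaurent f₁ →
      IsPositiveLaurent f₂ → IsPositiveLaurent (f₁ + f₂) := by
    rintro f₁ f₂ ⟨p, hp⟩ ⟨q, hq⟩
    exact ⟨p + q, by rw [map_add, hp, hq]⟩
  have hmul : ∀ f₁ f₂ : LaurentPolynomial A, IsPositiveLaurent f₁ →
      IsPositiveLaurent f₂ → IsPositiveLaurent (f₁ * f₂) := by
    rintro f₁ f₂ ⟨p, hp⟩ ⟨q, hq⟩
    exact ⟨p * q, by rw [map_mul, hp, hq]⟩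
  have hsum : ∀ (f : I → LaurentPolynomial A), (∀ w, IsPositiveLaurent (f w)) →
      IsPositiveLaurent (∑ w, f w) := by
    intro f hf
    exact Finset.sum_induction f IsPositiveLaurent (fun a b ha hb => hadd a b ha hb)
      ⟨0, map_zero _⟩ (fun w _ => hf w)
  -- characteristic two
  have h2 : ∀ r : LaurentPolynomial A, r + r = 0 := by
    intro r
    have hA2 : (2 : A) = 0 := by
      have := CharP.cast_eq_zero A 2
      simpa using this
    have h20 : (2 : LaurentPolynomial A) = 0 := by
      calc (2 : LaurentPolynomial A) = LaurentPolynomial.C (2 : A) :=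
            (map_ofNat _ 2).symm
        _ = 0 := by rw [hA2, map_zero]
    rw [← two_mul, h20, zero_mul]
  -- matrices
  let D : Matrix I I (LaurentPolynomial A) := Matrix.of fun a b => δ b a
  let G : Matrix I I (LaurentPolynomial A) := Matrix.of fun a b => g b a
  have hD : D * D = 0 := by
    refine Matrix.ext fun a b => ?_
    simp only [Matrix.mul_apply, Matrix.of_apply, D, Matrix.zero_apply]
    exact hrel b a
  have hGG : G * G = 0 := by
    refine Matrix.ext fun a b => ?_
    simp only [Matrix.mul_apply, Matrix.of_apply, G, Matrix.zero_apply]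
    exact hg2 b a
  have hGDG : G * D * G = 0 := by
    refine Matrix.ext fun a b => ?_
    simp only [Matrix.mul_apply, Matrix.of_apply, D, G, Matrix.zero_apply,
      Finset.sum_mul]
    exact hgδg b a
  have h2M : ∀ M : Matrix I I (LaurentPolynomial A), M + M = 0 := by
    intro M
    refine Matrix.ext fun a b => ?_
    simp only [Matrix.add_apply, Matrix.zero_apply]
    exact h2 _
  have hDY : ∀ z₁ z₂, δY z₁ z₂ = (D + G * D + D * G) z₂ z₁ := by
    intro z₁ z₂
    simp [δY, D, G, Matrix.add_apply, Matrix.mul_apply]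
  refine ⟨?_, ?_, ?_⟩
  · intro z₁ z₂
    exact hadd _ _ (hadd _ _ (hδpos z₁ z₂)
      (hsum _ fun w => hmul _ _ (hgpos w z₂) (hδpos z₁ w)))
      (hsum _ fun w => hmul _ _ (hδpos w z₂) (hgpos z₁ w))
  · intro z₁ z₂
    have key : ∑ w, δY w z₂ * δY z₁ w
        = ((D + G * D + D * G) * (D + G * D + D * G)) z₂ z₁ := by
      rw [Matrix.mul_apply]
      exact Finset.sum_congr rfl fun w _ => by rw [hDY, hDY]
    rw [key]
    have expand : (D + G * D + D * G) * (D + G * D + D * G)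
        = (D * (G * D) + D * (G * D)) + (D * D + D * D * G + G * (D * D)
          + (G * D * G) * D + G * (D * D) * G + D * (G * G) * D
          + D * (G * D * G)) := by noncomm_ring
    rw [expand]
    simp [hD, hGG, hGDG, h2M]
  · intro z₁ z₂
    have hE : ∀ z w : I, e z w = (1 : Matrix I I (LaurentPolynomial A)) w z := by
      intro z w
      simp only [e, Matrix.one_apply]
      by_cases h : z = w <;> simp [h, eq_comm]
    have hL : ∑ w, δY w z₂ * (e z₁ w + g z₁ w)
        = ((D + G * D + D * G) * (1 + G)) z₂ z₁ := by
      rw [Matrix.mul_apply]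
      refine Finset.sum_congr rfl fun w _ => ?_
      rw [hDY, hE]
      simp [G, Matrix.add_apply]
    have hRHS : ∑ w, (e w z₂ + g w z₂) * δ z₁ w
        = ((1 + G) * D) z₂ z₁ := by
      rw [Matrix.mul_apply]
      refine Finset.sum_congr rfl fun w _ => ?_
      rw [hE]
      simp [G, D, Matrix.add_apply]
    rw [hL, hRHS]
    have expand2 : (D + G * D + D * G) * (1 + G)
        = (D + G * D) + ((D * G + D * G) + G * D * G + D * (G * G)) := by
      noncomm_ring
    rw [expand2]
    simp [hGG, hGDG, h2M, Matrix.add_mul, Matrix.one_mul]
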